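/- Let φ_1, φ_2 ∈ Φ and let K, L ∈ 𝒦ⁿ. Then for every unit vector u ∈ S^{n−1}, b(K +_φ ε·L, u) → b(K,u) as ε → 0⁺. -/
import Mathlib


open MeasureTheory Metric Filter Set
open scoped RealInnerProductSpace ENNReal

noncomputable section

abbrev Euc (n : ℕ) := EuclideanSpace ℝ (Fin n)

/-- Support function `h(K,x) = sup {⟨x,y⟩ : y ∈ K}`. -/
def suppFn {n : ℕ} (K : Set (Euc n)) (x : Euc n) : ℝ :=
  sSup ((fun y => ⟪x, y⟫) '' K)

/-- Half width of `K` in direction `u`: `b(K,u) = (h(K,u)+h(K,-u))/2`. -/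
def halfWidth {n : ℕ} (K : Set (Euc n)) (u : Euc n) : ℝ :=
  (suppFn K u + suppFn K (-u)) / 2

/-- A convex body containing the origin in its interior. -/
def IsConvexBody {n : ℕ} (K : Set (Euc n)) : Prop :=
  IsCompact K ∧ Convex ℝ K ∧ (0 : Euc n) ∈ interior K

/-- Spherical Lebesgue measure on the unit sphere. -/
def sphMeasure (n : ℕ) : Measure (sphere (0 : Euc n) 1) :=
  (volume : Measure (Euc n)).toSphere

/-- Width integral `A_i(K) = (1/n) ∫_{S^{n-1}} b(K,u)^{n-i} dS(u)`. -/
def widthIntegral (n i : ℕ) (K : Set (Euc n)) : ℝ :=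
  (1 / (n : ℝ)) * ∫ u : sphere (0 : Euc n) 1,
    halfWidth K (u : Euc n) ^ ((n : ℝ) - i) ∂(sphMeasure n)

/-- `K` and `L` have similar width: `b(L,·) = λ b(K,·)` on the sphere for some `λ > 0`. -/
def SimilarWidth {n : ℕ} (K L : Set (Euc n)) : Prop :=
  ∃ lam : ℝ, 0 < lam ∧ ∀ u : Euc n, ‖u‖ = 1 → halfWidth L u = lam * halfWidth K u

/-- The class `Φ`: convex, strictly decreasing `φ : (0,∞) → (0,∞)` with
`φ(0⁺)=∞`, `φ(∞)=0`, `φ(1)=1`. -/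
structure IsOrliczPhi (φ : ℝ → ℝ) : Prop where
  convexOn : ConvexOn ℝ (Set.Ioi (0 : ℝ)) φ
  strictAntiOn : StrictAntiOn φ (Set.Ioi (0 : ℝ))
  pos : ∀ t : ℝ, 0 < t → 0 < φ t
  tendsto_zero : Filter.Tendsto φ (nhdsWithin 0 (Set.Ioi 0)) Filter.atTop
  tendsto_atTop : Filter.Tendsto φ Filter.atTop (nhds 0)
  one : φ 1 = 1


lemma suppFn_lb {n : ℕ} {K : Set (Euc n)} (hKc : IsCompact K) {r : ℝ} (hr : 0 < r)
    (hball : Metric.ball (0 : Euc n) r ⊆ K) {v : Euc n} (hv : ‖v‖ = 1) :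
    r / 2 ≤ suppFn K v := by
  have hy : (r/2) • v ∈ K := by
    apply hball
    simp only [Metric.mem_ball, dist_zero_right, norm_smul, hv, mul_one, Real.norm_eq_abs]
    rw [abs_of_pos (by linarith)]
    linarith
  have hbdd : BddAbove ((fun y => ⟪v, y⟫) '' K) :=
    (hKc.image (Continuous.inner continuous_const continuous_id)).bddAbove
  have h := le_csSup hbdd (Set.mem_image_of_mem _ hy)
  have hval : ⟪v, (r/2) • v⟫ = r/2 := by
    rw [real_inner_smul_right, real_inner_self_eq_norm_sq, hv]
    ring
  rw [hval] at h
  exact h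

lemma halfWidth_pos {n : ℕ} {K : Set (Euc n)} (hK : IsConvexBody K)
    {u : Euc n} (hu : ‖u‖ = 1) : 0 < halfWidth K u := by
  obtain ⟨hKc, -, h0⟩ := hK
  obtain ⟨r, hr, hball⟩ := Metric.mem_nhds_iff.mp (mem_interior_iff_mem_nhds.mp h0)
  have h1 := suppFn_lb hKc hr hball hu
  have h2 := suppFn_lb hKc hr hball (v := -u) (by rwa [norm_neg])
  unfold halfWidth
  linarith

/-- Half-width function of the Orlicz width linear combination `K +_φ ε·L`,
given the half widths `bK = b(K,u)`, `bL = b(L,u)`: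
`sup {λ > 0 : φ₁(bK/λ) + ε φ₂(bL/λ) ≤ 1}`. -/
def orliczComb (φ₁ φ₂ : ℝ → ℝ) (ε bK bL : ℝ) : ℝ :=
  sSup {lam : ℝ | 0 < lam ∧ φ₁ (bK / lam) + ε * φ₂ (bL / lam) ≤ 1}

/-- `b(K +_φ ε·L, u) → b(K,u)` as `ε → 0⁺`. -/
theorem orliczComb_tendsto_halfWidth {n : ℕ} (hn : 2 ≤ n)
    (φ₁ φ₂ : ℝ → ℝ) (hφ₁ : IsOrliczPhi φ₁) (hφ₂ : IsOrliczPhi φ₂)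
    (K L : Set (Euc n)) (hK : IsConvexBody K) (hL : IsConvexBody L)
    (u : Euc n) (hu : ‖u‖ = 1) :
    Tendsto (fun ε => orliczComb φ₁ φ₂ ε (halfWidth K u) (halfWidth L u))
      (nhdsWithin 0 (Set.Ioi 0)) (nhds (halfWidth K u)) := by
  have hbK : 0 < halfWidth K u := halfWidth_pos hK hu
  have hbL : 0 < halfWidth L u := halfWidth_pos hL hu
  set bK := halfWidth K u with hbKdef
  set bL := halfWidth L u with hbLdef
  set S : ℝ → Set ℝ := fun ε => {lam : ℝ | 0 < lam ∧ φ₁ (bK / lam) + ε * φ₂ (bL / lam) ≤ 1}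
    with hSdef
  have hcomb : ∀ ε : ℝ, orliczComb φ₁ φ₂ ε bK bL = sSup (S ε) := fun ε => rfl
  -- every element of S ε is < bK
  have hmem : ∀ ε > (0:ℝ), ∀ lam ∈ S ε, lam < bK := by
    intro ε hε lam hlam
    obtain ⟨hlam0, hle⟩ := hlam
    by_contra h
    push_neg at h
    have h1 : bK / lam ≤ 1 := (div_le_one hlam0).mpr h
    have h2 : 0 < bK / lam := div_pos hbK hlam0
    have h3 : (1:ℝ) ≤ φ₁ (bK / lam) := by
      have := hφ₁.strictAntiOn.antitoneOn h2 (Set.mem_Ioi.mpr one_pos) h1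
      rwa [hφ₁.one] at this
    have h4 : 0 < ε * φ₂ (bL / lam) := mul_pos hε (hφ₂.pos _ (div_pos hbL hlam0))
    linarith
  rw [Metric.tendsto_nhds]
  intro η hη
  set lam0 : ℝ := bK - min η bK / 2 with hlam0def
  have hmin : 0 < min η bK := lt_min hη hbK
  have hlam0pos : 0 < lam0 := by
    have := min_le_right η bK
    rw [hlam0def]; linarith
  have hlam0lt : lam0 < bK := by rw [hlam0def]; linarith
  have hgt : bK - η < lam0 := by
    have := min_le_left η bK
    rw [hlam0def]; linarith
  have hc : φ₁ (bK / lam0) < 1 := by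
    have h1 : (1:ℝ) < bK / lam0 := (one_lt_div hlam0pos).mpr hlam0lt
    have := hφ₁.strictAntiOn (Set.mem_Ioi.mpr one_pos)
      (Set.mem_Ioi.mpr (lt_trans one_pos h1)) h1
    rwa [hφ₁.one] at this
  set c := φ₁ (bK / lam0) with hcdef
  set d := φ₂ (bL / lam0) with hddef
  have hdpos : 0 < d := hφ₂.pos _ (div_pos hbL hlam0pos)
  have hδ : 0 < (1 - c) / d := div_pos (by linarith) hdpos
  filter_upwards [self_mem_nhdsWithin,
    ((gt_mem_nhds hδ).filter_mono nhdsWithin_le_nhds)] with ε hε hεδ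
  have hε0 : 0 < ε := hε
  have hmemS : lam0 ∈ S ε := by
    refine ⟨hlam0pos, ?_⟩
    have h5 : ε * d < ((1 - c) / d) * d := mul_lt_mul_of_pos_right hεδ hdpos
    rw [div_mul_cancel₀ _ (ne_of_gt hdpos)] at h5
    show φ₁ (bK / lam0) + ε * φ₂ (bL / lam0) ≤ 1
    rw [← hcdef, ← hddef]
    linarith
  have hbdd : BddAbove (S ε) := ⟨bK, fun x hx => (hmem ε hε0 x hx).le⟩
  have hle : orliczComb φ₁ φ₂ ε bK bL ≤ bK := by
    rw [hcomb]
    exact csSup_le ⟨lam0, hmemS⟩ (fun x hx => (hmem ε hε0 x hx).le)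
  have hge : lam0 ≤ orliczComb φ₁ φ₂ ε bK bL := by
    rw [hcomb]
    exact le_csSup hbdd hmemS
  rw [Real.dist_eq, abs_sub_lt_iff]
  constructor <;> linarith

end
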